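/- arXiv:0801.4835 — 2 statements merged into one kernel-verified Lean document; each statement's English description precedes it below -/
import Mathlib

section
/- Let d ≥ 1 and let E = (ε_{ik})_{0 ≤ i,k ≤ d} be any real matrix with 0 ≤ ε_{ik} < 1/2 for all i, k. Define w_0, w_1, …, w_d ∈ ℝ^d by (w_0)_k := 1 + ε_{0k} − ε_{00} for k = 1, …, d, and, for 1 ≤ i ≤ d, (w_i)_k := ε_{ik} − ε_{i0} − δ_{ik} for k = 1, …, d (δ the Kronecker delta); these are the normalized representatives of the points −e_i + ε_{i,·} of TA^d. Then the perturbed pyrope Π_d^E := tconv{w_0, w_1, …, w_d} is convex in the ordinary sense, i.e., it is a polytrope. -/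
open Set

noncomputable section

/-- Extended (homogeneous) coordinates of a point of `TA^d ≅ ℝ^d`:
the 0-th coordinate is normalized to `0`. -/
def ext {d : ℕ} (x : Fin d → ℝ) : Fin (d + 1) → ℝ := Fin.cons 0 x

/-- The tropical combination of `(l, x)` and `(m, y)`. -/
def tropComb {d : ℕ} (l m : ℝ) (x y : Fin d → ℝ) : Fin d → ℝ :=
  fun i => min (l + x i) (m + y i) - min l m

/-- A set is tropically convex if it is closed under tropical combinations. -/
def TropConvex {d : ℕ} (S : Set (Fin d → ℝ)) : Prop :=
  ∀ x ∈ S, ∀ y ∈ S, ∀ l m : ℝ, tropComb l m x y ∈ S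

/-- The tropical convex hull: the intersection of all tropically convex supersets. -/
def tconv {d : ℕ} (V : Set (Fin d → ℝ)) : Set (Fin d → ℝ) :=
  ⋂₀ {S : Set (Fin d → ℝ) | TropConvex S ∧ V ⊆ S}

/-- A tropical polytope is the tropical convex hull of a finite set. -/
def IsTropPolytope {d : ℕ} (P : Set (Fin d → ℝ)) : Prop :=
  ∃ V : Finset (Fin d → ℝ), P = tconv (V : Set (Fin d → ℝ))

/-- A polytrope is a tropical polytope which is also convex in the ordinary sense. -/
def IsPolytrope {d : ℕ} (P : Set (Fin d → ℝ)) : Prop :=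
  IsTropPolytope P ∧ Convex ℝ P


/-!
In homogeneous coordinates the generators are the rows of the matrix `B` with
`B j k = ε_{jk} - ε_{jj} + 1 - δ_{jk}`, normalized so that their `0`-th coordinate vanishes.
Since the entries of `E` lie in `[0, 1/2)`, `B` has zero diagonal and satisfies the triangle
inequality `B i k ≤ B i j + B j k`. For such a matrix the tropical convex hull of its rows is the
set `{x | x̂_k - x̂_j ≤ B j k for all j, k}`: the rows lie in this set by the triangle inequality,
the set is tropically convex, and every `x` in it is the tropical combination of the rows with
coefficients `x̂_i + B i 0`. Being cut out by linear inequalities, this set is convex.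
-/

@[simp]
lemma ext_apply_zero {d : ℕ} (x : Fin d → ℝ) : ext x 0 = 0 := rfl

@[simp]
lemma ext_apply_succ {d : ℕ} (x : Fin d → ℝ) (k : Fin d) : ext x k.succ = x k :=
  Fin.cons_succ _ _ _

lemma ext_tropComb {d : ℕ} (l m : ℝ) (x y : Fin d → ℝ) (s : Fin (d + 1)) :
    ext (tropComb l m x y) s = min (l + ext x s) (m + ext y s) - min l m := by
  cases s using Fin.cases <;> simp [tropComb]

lemma ext_add_smul {d : ℕ} (a b : ℝ) (x y : Fin d → ℝ) (s : Fin (d + 1)) :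
    ext (a • x + b • y) s = a * ext x s + b * ext y s := by
  cases s using Fin.cases <;> simp

lemma TropConvex.inf'_mem {d : ℕ} {S : Set (Fin d → ℝ)} (hS : TropConvex S) {ι : Type*}
    {s : Finset ι} (hs : s.Nonempty) (v : ι → Fin d → ℝ) (hv : ∀ i ∈ s, v i ∈ S)
    (lam : ι → ℝ) :
    (fun k => s.inf' hs (fun i => lam i + v i k) - s.inf' hs lam) ∈ S := by
  induction hs using Finset.Nonempty.cons_induction with
  | singleton a => simpa using hv a (Finset.mem_singleton_self a)
  | cons a s ha hs ih =>
    have hy := ih fun i hi => hv i (Finset.mem_cons_of_mem hi)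
    convert hS _ (hv a (Finset.mem_cons_self a s)) _ hy (lam a) (s.inf' hs lam) using 1
    funext k
    rw [tropComb, Finset.inf'_cons hs, Finset.inf'_cons hs, add_sub_cancel]

lemma isTropPolytope_tconv_range {d : ℕ} {ι : Type*} [Finite ι] (w : ι → Fin d → ℝ) :
    IsTropPolytope (tconv (range w)) :=
  ⟨(finite_range w).toFinset, by rw [Finite.coe_toFinset]⟩

def polytropeOfMatrix {d : ℕ} (B : Fin (d + 1) → Fin (d + 1) → ℝ) : Set (Fin d → ℝ) :=
  {x | ∀ j k, ext x k - ext x j ≤ B j k}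

section polytropeOfMatrix

variable {d : ℕ} (B : Fin (d + 1) → Fin (d + 1) → ℝ)

lemma tropConvex_polytropeOfMatrix : TropConvex (polytropeOfMatrix B) := by
  intro x hx y hy l m j k
  show _ ≤ _
  rw [ext_tropComb, ext_tropComb]
  have hxk := hx j k
  have hyk := hy j k
  have hl := min_le_left (l + ext x k) (m + ext y k)
  have hm := min_le_right (l + ext x k) (m + ext y k)
  have : min (l + ext x k) (m + ext y k) - B j k ≤ min (l + ext x j) (m + ext y j) :=
    le_min (by linarith) (by linarith)
  linarith

lemma convex_polytropeOfMatrix : Convex ℝ (polytropeOfMatrix B) := by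
  intro x hx y hy a b ha hb hab j k
  rw [ext_add_smul, ext_add_smul]
  calc a * ext x k + b * ext y k - (a * ext x j + b * ext y j)
      = a * (ext x k - ext x j) + b * (ext y k - ext y j) := by ring
    _ ≤ a * B j k + b * B j k := by gcongr <;> [exact hx j k; exact hy j k]
    _ = B j k := by rw [← add_mul, hab, one_mul]

variable {B}

lemma inf'_ext_add_of_mem_polytropeOfMatrix (hB : ∀ j, B j j = 0)
    {x : Fin d → ℝ} (hx : x ∈ polytropeOfMatrix B) (s : Fin (d + 1)) :
    Finset.univ.inf' Finset.univ_nonempty (fun i => ext x i + B i s) = ext x s :=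
  le_antisymm ((Finset.inf'_le _ (Finset.mem_univ s)).trans_eq (by rw [hB s, add_zero]))
    (Finset.le_inf' _ _ fun i _ => by linarith [hx i s])

theorem tconv_eq_polytropeOfMatrix (hB : ∀ j, B j j = 0)
    (htri : ∀ i j k, B i k ≤ B i j + B j k) (w : Fin (d + 1) → Fin d → ℝ)
    (hw : ∀ i k, ext (w i) k = B i k - B i 0) :
    tconv (range w) = polytropeOfMatrix B := by
  refine subset_antisymm (sInter_subset_of_mem ⟨tropConvex_polytropeOfMatrix B, ?_⟩) ?_
  · rintro _ ⟨i, rfl⟩ j k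
    linarith [hw i k, hw i j, htri i j k]
  · rintro x hx S ⟨hS, hwS⟩
    have hcoef : ∀ s, Finset.univ.inf' Finset.univ_nonempty
        (fun i => (ext x i + B i 0) + ext (w i) s) = ext x s := by
      intro s
      simp only [hw, add_add_sub_cancel, inf'_ext_add_of_mem_polytropeOfMatrix hB hx]
    convert hS.inf'_mem Finset.univ_nonempty w (fun i _ => hwS ⟨i, rfl⟩)
      (fun i => ext x i + B i 0) using 1
    funext k
    have h0 := hcoef 0
    have hk := hcoef k.succ
    simp only [ext_apply_zero, ext_apply_succ, add_zero] at h0 hk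
    rw [hk, h0, sub_zero]

end polytropeOfMatrix

/-- Row `j` is the homogeneous generator `-e_j + ε_{j,·}`, shifted so that its `j`-th
coordinate vanishes. -/
def pyropeMatrix {d : ℕ} (E : Fin (d + 1) → Fin (d + 1) → ℝ) (j k : Fin (d + 1)) : ℝ :=
  E j k - E j j + if j = k then 0 else 1

lemma pyropeMatrix_self {d : ℕ} (E : Fin (d + 1) → Fin (d + 1) → ℝ) (j : Fin (d + 1)) :
    pyropeMatrix E j j = 0 := by
  simp [pyropeMatrix]

lemma pyropeMatrix_le_add {d : ℕ} {E : Fin (d + 1) → Fin (d + 1) → ℝ}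
    (hE0 : ∀ i k, 0 ≤ E i k) (hE2 : ∀ i k, E i k < 1 / 2) (i j k : Fin (d + 1)) :
    pyropeMatrix E i k ≤ pyropeMatrix E i j + pyropeMatrix E j k := by
  have := hE0 i j
  have := hE0 j k
  have := hE0 j i
  have := hE2 i k
  have := hE2 i i
  have := hE2 j j
  unfold pyropeMatrix
  split_ifs <;> subst_vars <;> first | contradiction | linarith

def pyropeVertex {d : ℕ} (E : Fin (d + 1) → Fin (d + 1) → ℝ) (i : Fin (d + 1)) : Fin d → ℝ :=
  fun k => if i = 0 then 1 + E 0 k.succ - E 0 0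
    else E i k.succ - E i 0 - (if k.succ = i then 1 else 0)

lemma ext_pyropeVertex {d : ℕ} (E : Fin (d + 1) → Fin (d + 1) → ℝ) (i k : Fin (d + 1)) :
    ext (pyropeVertex E i) k = pyropeMatrix E i k - pyropeMatrix E i 0 := by
  cases k using Fin.cases with
  | zero => simp
  | succ m =>
    rw [ext_apply_succ, pyropeVertex, pyropeMatrix, pyropeMatrix]
    rcases eq_or_ne i 0 with rfl | hi
    · simp only [↓reduceIte, Ne.symm (Fin.succ_ne_zero m), sub_self, add_zero, sub_zero]
      ring
    · simp only [hi, if_false, eq_comm (a := i)]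
      split_ifs <;> ring

theorem perturbed_pyrope_is_polytrope_general {d : ℕ}
    (E : Fin (d + 1) → Fin (d + 1) → ℝ)
    (hE0 : ∀ i k, 0 ≤ E i k) (hE2 : ∀ i k, E i k < 1 / 2) :
    IsPolytrope (tconv (Set.range fun i : Fin (d + 1) => fun k : Fin d =>
      if i = 0 then 1 + E 0 k.succ - E 0 0
      else E i k.succ - E i 0 - (if k.succ = i then 1 else 0))) := by
  change IsPolytrope (tconv (range (pyropeVertex E)))
  have htconv := tconv_eq_polytropeOfMatrix (pyropeMatrix_self E) (pyropeMatrix_le_add hE0 hE2)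
    (pyropeVertex E) (ext_pyropeVertex E)
  exact ⟨isTropPolytope_tconv_range _, htconv ▸ convex_polytropeOfMatrix _⟩

/-- For any perturbation matrix `E` with entries in `[0, 1/2)`, the perturbed
pyrope `Π_d^E = tconv{-e_0 + ε_{0,·}, …, -e_d + ε_{d,·}}` (in normalized coordinates:
`(w_0)_k = 1 + ε_{0k} - ε_{00}` and `(w_i)_k = ε_{ik} - ε_{i0} - δ_{ik}` for `i ≥ 1`)
is convex in the ordinary sense, i.e. a polytrope. -/
theorem perturbed_pyrope_is_polytrope {d : ℕ} (hd : 1 ≤ d)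
    (E : Fin (d + 1) → Fin (d + 1) → ℝ)
    (hE0 : ∀ i k, 0 ≤ E i k) (hE2 : ∀ i k, E i k < 1 / 2) :
    IsPolytrope (tconv (Set.range fun i : Fin (d + 1) => fun k : Fin d =>
      if i = 0 then 1 + E 0 k.succ - E 0 0
      else E i k.succ - E i 0 - (if k.succ = i then 1 else 0))) :=
  perturbed_pyrope_is_polytrope_general E hE0 hE2
end
end

section
/- The ordinary triangle T := conv{(0,0), (2,1), (0,1)} ⊆ ℝ² is tropically convex, but T is not a tropical polytope: there is no finite set V ⊆ ℝ² with tconv(V) = T. -/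
/-!
In coordinates `x 0, x 1` the triangle is `0 ≤ x 0`, `x 1 ≤ 1`, `x 0 ≤ 2 * x 1`. Write a tropical
combination as `min (a + x) (b + y)` with `a, b ≥ 0` and `min a b = 0`. Every coordinate then lies
between those of `x` and `y`, and if the minimum in coordinate `1` is `a + x 1`, then
`z 0 ≤ a + x 0 ≤ a + 2 * x 1 ≤ 2 * z 1`; so all three half-planes are tropically convex. On the
edge `x 0 = 2 * x 1` the last inequality forces `a = 0` and `z = x`: every point of that edge is a
tropical extreme point. A tropical extreme point of `tconv V` lies in `V`, since otherwise removing
it leaves a tropically convex set containing `V`. Hence a tropical polytope has only finitely many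
extreme points, whereas the edge is infinite.
-/

open Set

noncomputable section

section TropicalConvexity

variable {d : ℕ}

lemma tropComb_comm (l m : ℝ) (x y : Fin d → ℝ) : tropComb l m x y = tropComb m l y x := by
  funext i
  simp only [tropComb, min_comm]

lemma min_le_tropComb_apply (l m : ℝ) (x y : Fin d → ℝ) (i : Fin d) :
    min (x i) (y i) ≤ tropComb l m x y i :=
  le_sub_iff_add_le.2 <| le_min
    (by linarith [min_le_left (x i) (y i), min_le_left l m])
    (by linarith [min_le_right (x i) (y i), min_le_right l m])

lemma tropComb_apply_le_max (l m : ℝ) (x y : Fin d → ℝ) (i : Fin d) :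
    tropComb l m x y i ≤ max (x i) (y i) := by
  simp only [tropComb]
  rcases le_total l m with hlm | hlm
  · linarith [min_eq_left hlm, min_le_left (l + x i) (m + y i), le_max_left (x i) (y i)]
  · linarith [min_eq_right hlm, min_le_right (l + x i) (m + y i), le_max_right (x i) (y i)]

lemma TropConvex.inter {S T : Set (Fin d → ℝ)} (hS : TropConvex S) (hT : TropConvex T) :
    TropConvex (S ∩ T) :=
  fun x hx y hy l m => ⟨hS x hx.1 y hy.1 l m, hT x hx.2 y hy.2 l m⟩

lemma tropConvex_setOf_le_apply (a : ℝ) (i : Fin d) : TropConvex {x : Fin d → ℝ | a ≤ x i} :=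
  fun x hx y hy l m => (le_min hx hy).trans (min_le_tropComb_apply l m x y i)

lemma tropConvex_setOf_apply_le (b : ℝ) (i : Fin d) : TropConvex {x : Fin d → ℝ | x i ≤ b} :=
  fun x hx y hy l m => (tropComb_apply_le_max l m x y i).trans (max_le hx hy)

lemma tropConvex_setOf_apply_le_mul {c : ℝ} (hc : 1 ≤ c) (i j : Fin d) :
    TropConvex {x : Fin d → ℝ | x i ≤ c * x j} := by
  intro x hx y hy l m
  wlog h : l + x j ≤ m + y j generalizing x y l m
  · rw [tropComb_comm]
    exact this y hy x hx m l (le_of_not_ge h)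
  have hj : tropComb l m x y j = l + x j - min l m := by simp only [tropComb, min_eq_left h]
  have hi : tropComb l m x y i ≤ (l - min l m) + x i := by
    simp only [tropComb]; linarith [min_le_left (l + x i) (m + y i)]
  have hshift : 0 ≤ l - min l m := by linarith [min_le_left l m]
  have hxij : x i ≤ c * x j := hx
  calc tropComb l m x y i ≤ (l - min l m) + x i := hi
    _ ≤ (l - min l m) + c * x j := by linarith
    _ ≤ c * tropComb l m x y j := by rw [hj]; nlinarith

lemma tropConvex_tconv (V : Set (Fin d → ℝ)) : TropConvex (tconv V) :=
  fun _ hx _ hy l m S hS => hS.1 _ (hx S hS) _ (hy S hS) l m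

lemma subset_tconv (V : Set (Fin d → ℝ)) : V ⊆ tconv V :=
  fun _ hv _ hS => hS.2 hv

lemma tconv_subset {V S : Set (Fin d → ℝ)} (hS : TropConvex S) (hVS : V ⊆ S) : tconv V ⊆ S :=
  sInter_subset_of_mem ⟨hS, hVS⟩

/-- Tropical analogue of `Set.extremePoints`; tropical segments are closed, so `p` must be an
endpoint of every tropical segment of `S` through it. -/
def tropExtremePoints (S : Set (Fin d → ℝ)) : Set (Fin d → ℝ) :=
  {p ∈ S | ∀ x ∈ S, ∀ y ∈ S, ∀ l m : ℝ, tropComb l m x y = p → p = x ∨ p = y}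

lemma TropConvex.diff_singleton {S : Set (Fin d → ℝ)} {p : Fin d → ℝ} (hS : TropConvex S)
    (hp : p ∈ tropExtremePoints S) : TropConvex (S \ {p}) := by
  intro x hx y hy l m
  refine ⟨hS x hx.1 y hy.1 l m, fun hz => ?_⟩
  rcases hp.2 x hx.1 y hy.1 l m hz with rfl | rfl
  exacts [hx.2 rfl, hy.2 rfl]

lemma tropExtremePoints_tconv_subset (V : Set (Fin d → ℝ)) : tropExtremePoints (tconv V) ⊆ V := by
  intro p hp
  by_contra hpV
  have hV : V ⊆ tconv V \ {p} := fun v hv => ⟨subset_tconv V hv, fun hvp => hpV (hvp ▸ hv)⟩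
  exact (tconv_subset ((tropConvex_tconv V).diff_singleton hp) hV hp.1).2 rfl

lemma IsTropPolytope.finite_tropExtremePoints {P : Set (Fin d → ℝ)} (hP : IsTropPolytope P) :
    (tropExtremePoints P).Finite := by
  obtain ⟨V, rfl⟩ := hP
  exact V.finite_toSet.subset (tropExtremePoints_tconv_subset _)

end TropicalConvexity

lemma tropComb_eq_or_eq_of_apply_eq_mul {c : ℝ} (hc : 1 < c) {x y : Fin 2 → ℝ}
    (hx : x 0 ≤ c * x 1) (hy : y 0 ≤ c * y 1) {l m : ℝ}
    (h : tropComb l m x y 0 = c * tropComb l m x y 1) :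
    tropComb l m x y = x ∨ tropComb l m x y = y := by
  wlog hxy : l + x 1 ≤ m + y 1 generalizing x y l m
  · rw [tropComb_comm] at h ⊢
    exact (this hy hx h (le_of_not_ge hxy)).symm
  have h1 : tropComb l m x y 1 = l + x 1 - min l m := by simp only [tropComb, min_eq_left hxy]
  have h0 : tropComb l m x y 0 ≤ l + x 0 - min l m := by
    simp only [tropComb]; linarith [min_le_left (l + x 0) (m + y 0)]
  have hshift : l - min l m = 0 := by
    nlinarith [min_le_left l m]
  have e1 : tropComb l m x y 1 = x 1 := by linarith
  have e0 : tropComb l m x y 0 = x 0 := by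
    have hx0 : x 0 ≤ tropComb l m x y 0 := by rw [h, e1]; exact hx
    linarith
  left
  funext i
  fin_cases i
  exacts [e0, e1]

lemma mem_tropExtremePoints_of_apply_eq_mul {c : ℝ} (hc : 1 < c) {S : Set (Fin 2 → ℝ)}
    (hS : S ⊆ {x | x 0 ≤ c * x 1}) {p : Fin 2 → ℝ} (hpS : p ∈ S) (hp : p 0 = c * p 1) :
    p ∈ tropExtremePoints S := by
  refine ⟨hpS, fun x hx y hy l m hxy => ?_⟩
  subst hxy
  exact tropComb_eq_or_eq_of_apply_eq_mul hc (hS hx) (hS hy) hp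

lemma convexHull_triangle :
    convexHull ℝ ({![0, 0], ![2, 1], ![0, 1]} : Set (Fin 2 → ℝ)) =
      {x | 0 ≤ x 0} ∩ {x | x 1 ≤ 1} ∩ {x | x 0 ≤ 2 * x 1} := by
  have hline : Convex ℝ {x : Fin 2 → ℝ | x 0 ≤ 2 * x 1} := by
    simpa only [sub_nonpos] using convex_halfSpace_le (r := 0)
      (f := fun x : Fin 2 → ℝ => x 0 - 2 * x 1) ⟨fun x y => by simp only [Pi.add_apply]; ring, fun c x => by simp only [Pi.smul_apply, smul_eq_mul]; ring⟩
  refine Subset.antisymm (convexHull_min ?_ ?_) ?_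
  · rintro _ (rfl | rfl | rfl) <;> norm_num
  · exact ((convex_halfSpace_ge (LinearMap.proj 0).isLinear 0).inter
      (convex_halfSpace_le (LinearMap.proj 1).isLinear 1)).inter hline
  · rintro p ⟨⟨h0 : 0 ≤ p 0, h1 : p 1 ≤ 1⟩, h2 : p 0 ≤ 2 * p 1⟩
    let w : Fin 3 → ℝ := ![1 - p 1, p 0 / 2, p 1 - p 0 / 2]
    let v : Fin 3 → Fin 2 → ℝ := ![![0, 0], ![2, 1], ![0, 1]]
    have hp : ∑ i, w i • v i = p := by
      funext j; fin_cases j <;> simp [w, v, Fin.sum_univ_three]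
    rw [← hp]
    refine (convex_convexHull ℝ _).sum_mem (fun i _ => ?_) (by simp [w, Fin.sum_univ_three])
      (fun i _ => subset_convexHull ℝ _ ?_)
    · fin_cases i <;> simp [w] <;> linarith
    · fin_cases i <;> simp [v]

/-- The ordinary triangle `conv{(0,0), (2,1), (0,1)} ⊆ ℝ²` is tropically
convex, yet it is not a tropical polytope: it is not the tropical convex hull of any
finite set. -/
theorem triangle_tropically_convex_not_tropical_polytope :
    TropConvex (convexHull ℝ ({![0, 0], ![2, 1], ![0, 1]} : Set (Fin 2 → ℝ))) ∧
      ¬∃ V : Finset (Fin 2 → ℝ),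
        convexHull ℝ ({![0, 0], ![2, 1], ![0, 1]} : Set (Fin 2 → ℝ)) =
          tconv (V : Set (Fin 2 → ℝ)) := by
  rw [convexHull_triangle]
  refine ⟨((tropConvex_setOf_le_apply 0 0).inter (tropConvex_setOf_apply_le 1 1)).inter
    (tropConvex_setOf_apply_le_mul one_le_two 0 1), fun hT : IsTropPolytope _ => ?_⟩
  have hedge : (fun t : ℝ => ![2 * t, t]) '' Icc 0 1 ⊆
      tropExtremePoints ({x | 0 ≤ x 0} ∩ {x | x 1 ≤ 1} ∩ {x | x 0 ≤ 2 * x 1}) := by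
    rintro _ ⟨t, ht, rfl⟩
    refine mem_tropExtremePoints_of_apply_eq_mul one_lt_two inter_subset_right ?_ (by simp)
    refine ⟨⟨?_, ?_⟩, ?_⟩ <;> simp [ht.1, ht.2]
  have hinj : InjOn (fun t : ℝ => ![2 * t, t]) (Icc 0 1) :=
    fun a _ b _ hab => by simpa using congrFun hab 1
  exact (Icc_infinite zero_lt_one).image hinj (hT.finite_tropExtremePoints.subset hedge)
end
end
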